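/- arXiv:2512.01601 — 7 statements merged into one kernel-verified Lean document; each statement's English description precedes it below -/
import Mathlib

section
/- Let k ≥ 1 be an integer, let β > 0 and γ > 0 be reals, set p = (β+γ)k/2, and assume p > max{β, γ}. Let τ > 0, Ĉ > 0, C̃ > 0 be reals, and let X, Y, a, b, c, d be nonnegative reals satisfying X ≤ a^{1−β/p}·b^{β/p} and Y ≤ c^{1−γ/p}·d^{γ/p} (real powers). Then τ·X·Y ≤ C₁·a² + C₂·τ^{k}·b² + C₃·c² + C₄·τ^{k}·d², where C₁ = ((1−β/p)/2)·Ĉ^{1/(1−β/p)}, C₂ = (β/(2p))·Ĉ^{−p/β}, C₃ = ((1−γ/p)/2)·C̃^{1/(1−γ/p)}, and C₄ = (γ/(2p))·C̃^{−p/γ}. -/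
/-!
Split `τ = τ^q τ^{1-q}` with `q = β/(β+γ)` and apply AM–GM to the product
`(τ^q X)(τ^{1-q} Y)`. Because `p = (β+γ)k/2`, the resulting weights are
`τ^{2q} = (τ^k)^{β/p}` and `τ^{2(1-q)} = (τ^k)^{γ/p}`. Each square is then split by the
weighted Young inequality with exponents `1 - β/p, β/p` (resp. with `γ`), after moving the
constant `Ĉ` (resp. `C̃`) from one factor to the other.
-/

open Real

namespace Real

lemma rpow_one_sub_mul_rpow_le {w C A B : ℝ} (hw₀ : 0 < w) (hw₁ : w < 1) (hC : 0 < C)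
    (hA : 0 ≤ A) (hB : 0 ≤ B) :
    A ^ (1 - w) * B ^ w ≤ (1 - w) * C ^ (1 / (1 - w)) * A + w * C ^ (-(1 / w)) * B := by
  have hw₁' : 0 < 1 - w := sub_pos.mpr hw₁
  have hshift : (C ^ (1 / (1 - w)) * A) ^ (1 - w) * (C ^ (-(1 / w)) * B) ^ w
      = A ^ (1 - w) * B ^ w := by
    rw [mul_rpow (by positivity) hA, mul_rpow (by positivity) hB,
      ← rpow_mul hC.le, ← rpow_mul hC.le,
      one_div_mul_cancel hw₁'.ne', neg_mul, one_div_mul_cancel hw₀.ne', rpow_neg_one,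
      rpow_one]
    field_simp
  rw [← hshift, mul_assoc, mul_assoc (w : ℝ)]
  exact geom_mean_le_arith_mean2_weighted hw₁'.le hw₀.le (by positivity) (by positivity)
    (by ring)

lemma rpow_mul_sq_le {w C t x y : ℝ} (hw₀ : 0 < w) (hw₁ : w < 1) (hC : 0 < C)
    (ht : 0 ≤ t) (hx : 0 ≤ x) (hy : 0 ≤ y) :
    t ^ w * (x ^ (1 - w) * y ^ w) ^ 2 ≤
      (1 - w) * C ^ (1 / (1 - w)) * x ^ 2 + w * C ^ (-(1 / w)) * t * y ^ 2 := by
  have hsq : ∀ z u : ℝ, 0 ≤ z → (z ^ u) ^ 2 = (z ^ 2) ^ u := fun z u hz => by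
    rw [← rpow_natCast, ← rpow_natCast z, ← rpow_mul hz, ← rpow_mul hz, mul_comm]
  have hlhs : t ^ w * (x ^ (1 - w) * y ^ w) ^ 2 = (x ^ 2) ^ (1 - w) * (t * y ^ 2) ^ w := by
    rw [mul_pow, hsq x _ hx, hsq y _ hy, mul_rpow ht (sq_nonneg y)]
    ring
  rw [hlhs, mul_assoc (w * _)]
  exact rpow_one_sub_mul_rpow_le hw₀ hw₁ hC (sq_nonneg x) (by positivity)

lemma mul_mul_le_rpow_sq_add_rpow_sq {τ : ℝ} (hτ : 0 < τ) (q U V : ℝ) :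
    τ * U * V ≤ (τ ^ (2 * q) * U ^ 2 + τ ^ (2 * (1 - q)) * V ^ 2) / 2 := by
  have hsq : ∀ r : ℝ, (τ ^ r) ^ 2 = τ ^ (2 * r) := fun r => by
    rw [← rpow_natCast, ← rpow_mul hτ.le, mul_comm]
    norm_num
  have hsplit : τ * U * V = (τ ^ q * U) * (τ ^ (1 - q) * V) := by
    rw [mul_mul_mul_comm, ← rpow_add hτ, add_sub_cancel, rpow_one, mul_assoc]
  rw [hsplit, ← hsq, ← hsq]
  nlinarith [two_mul_le_add_sq (τ ^ q * U) (τ ^ (1 - q) * V)]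

end Real

theorem stmt_3_general (k : ℕ) (β γ : ℝ) (hβ : 0 < β) (hγ : 0 < γ)
    (p : ℝ) (hpdef : p = (β + γ) * k / 2) (hpβ : β < p) (hpγ : γ < p)
    (τ Chat Ctil : ℝ) (hτ : 0 < τ) (hChat : 0 < Chat) (hCtil : 0 < Ctil)
    (X Y a b c d : ℝ)
    (hY0 : 0 ≤ Y) (ha : 0 ≤ a) (hb : 0 ≤ b) (hc : 0 ≤ c) (hd : 0 ≤ d)
    (hX : X ≤ a ^ (1 - β / p) * b ^ (β / p))
    (hY : Y ≤ c ^ (1 - γ / p) * d ^ (γ / p)) :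
    τ * X * Y ≤
      ((1 - β / p) / 2) * Chat ^ (1 / (1 - β / p)) * a ^ 2
        + (β / (2 * p)) * Chat ^ (-(p / β)) * τ ^ (k : ℝ) * b ^ 2
        + ((1 - γ / p) / 2) * Ctil ^ (1 / (1 - γ / p)) * c ^ 2
        + (γ / (2 * p)) * Ctil ^ (-(p / γ)) * τ ^ (k : ℝ) * d ^ 2 := by
  have hp : 0 < p := hβ.trans hpβ
  have hexp : ∀ δ : ℝ, 2 * (δ / (β + γ)) = k * (δ / p) := fun δ => by
    rw [hpdef]
    have hk0 : (k : ℝ) ≠ 0 := by rintro hk; simp [hpdef, hk] at hp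
    field_simp
  have hτk : ∀ δ : ℝ, τ ^ (2 * (δ / (β + γ))) = (τ ^ (k : ℝ)) ^ (δ / p) := fun δ => by
    rw [hexp, rpow_mul hτ.le]
  have hXY : τ * X * Y ≤ τ * (a ^ (1 - β / p) * b ^ (β / p)) * (c ^ (1 - γ / p) * d ^ (γ / p)) :=
    mul_le_mul (mul_le_mul_of_nonneg_left hX hτ.le) hY hY0 (by positivity)
  have hsplit := mul_mul_le_rpow_sq_add_rpow_sq hτ (β / (β + γ))
    (a ^ (1 - β / p) * b ^ (β / p)) (c ^ (1 - γ / p) * d ^ (γ / p))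
  rw [show 1 - β / (β + γ) = γ / (β + γ) by field_simp; ring, hτk, hτk] at hsplit
  have hyoungβ := rpow_mul_sq_le (div_pos hβ hp) ((div_lt_one hp).mpr hpβ) hChat
    (by positivity : 0 ≤ τ ^ (k : ℝ)) ha hb
  have hyoungγ := rpow_mul_sq_le (div_pos hγ hp) ((div_lt_one hp).mpr hpγ) hCtil
    (by positivity : 0 ≤ τ ^ (k : ℝ)) hc hd
  rw [one_div_div] at hyoungβ hyoungγ
  rw [div_mul_eq_div_div_swap, div_mul_eq_div_div_swap]
  linarith [hXY.trans hsplit]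

/-- The tuned form of Lemma 3.1 used in Theorem 3.3: with `p = (β+γ)k/2` both
τ-exponents equal `k`. `Chat` stands for Ĉ and `Ctil` for C̃.
All powers with real exponents are real (`rpow`) powers. -/
theorem stmt_3 (k : ℕ) (hk : 1 ≤ k) (β γ : ℝ) (hβ : 0 < β) (hγ : 0 < γ)
    (p : ℝ) (hpdef : p = (β + γ) * k / 2) (hpβ : β < p) (hpγ : γ < p)
    (τ Chat Ctil : ℝ) (hτ : 0 < τ) (hChat : 0 < Chat) (hCtil : 0 < Ctil)
    (X Y a b c d : ℝ)
    (hX0 : 0 ≤ X) (hY0 : 0 ≤ Y) (ha : 0 ≤ a) (hb : 0 ≤ b) (hc : 0 ≤ c) (hd : 0 ≤ d)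
    (hX : X ≤ a ^ (1 - β / p) * b ^ (β / p))
    (hY : Y ≤ c ^ (1 - γ / p) * d ^ (γ / p)) :
    τ * X * Y ≤
      ((1 - β / p) / 2) * Chat ^ (1 / (1 - β / p)) * a ^ 2
        + (β / (2 * p)) * Chat ^ (-(p / β)) * τ ^ (k : ℝ) * b ^ 2
        + ((1 - γ / p) / 2) * Ctil ^ (1 / (1 - γ / p)) * c ^ 2
        + (γ / (2 * p)) * Ctil ^ (-(p / γ)) * τ ^ (k : ℝ) * d ^ 2 :=
  stmt_3_general k β γ hβ hγ p hpdef hpβ hpγ τ Chat Ctil hτ hChat hCtil X Y a b c d hY0 ha hb hc hd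
    hX hY
end

section
/- Let k ≥ 1 be an integer. Let C*₀, …, C*_{k−1} be nonnegative real numbers with C*₀ = 1, and define C̄ⱼ = Σ_{l=j}^{k−1} C*_l for 0 ≤ j ≤ k−1. Let C_L, C₁, C₂, C₃, C₄, A be nonnegative real numbers satisfying 1 − C_L·(C₃ + C₁·C̄₀) ≥ C_L·C₃·C̄₁ and A − C_L·(C₄ + C₂·C̄₀) ≥ C_L·C₄·C̄₁. Let E : ℕ → ℝ and let a, b : ℕ → ℝ be nonnegative sequences such that for every n ≥ k: E_{n+1} − E_n + a_{n+1} + A·b_{n+1} ≤ C_L·(C₃ + C₁·C̄₀)·a_{n+1} + C_L·(C₄ + C₂·C̄₀)·b_{n+1} + C_L·C₃·Σ_{j=1}^{k−1} C*ⱼ·a_{n−j+1} + C_L·C₄·Σ_{j=1}^{k−1} C*ⱼ·b_{n−j+1}. Define the modified energy Ẽₙ = Eₙ + C_L·C₃·Σ_{j=1}^{k−1} C̄ⱼ·a_{n−j+1} + C_L·C₄·Σ_{j=1}^{k−1} C̄ⱼ·b_{n−j+1}. Then Ẽ_{n+1} ≤ Ẽₙ for every n ≥ k. -/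
/-!
Since `C̄ⱼ - C̄ⱼ₊₁ = C*ⱼ` and `C̄ₖ = 0`, advancing the memory sum `Σⱼ C̄ⱼ c_{n-j+1}` by one time
step adds `C̄₁ c_{n+1}` and removes exactly the memory term `Σⱼ C*ⱼ c_{n-j+1}` of the step
estimate (summation by parts). Hence `Ẽₙ₊₁ - Ẽₙ` is bounded by the step estimate plus
`C_L C₃ C̄₁ a_{n+1} + C_L C₄ C̄₁ b_{n+1}`, and these are absorbed by conditions (3.22)–(3.23).
-/

open Finset

section TailSums

variable {R : Type*} [CommRing R]

theorem sum_Ico_tail_mul_pred_sub (f g : ℕ → R) (k : ℕ) :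
    ∑ j ∈ Ico 1 k, (∑ l ∈ Ico j k, f l) * (g (j - 1) - g j)
      = ∑ l ∈ Ico 1 k, f l * (g 0 - g l) := by
  simp_rw [sum_mul]
  rw [sum_Ico_Ico_comm]
  refine sum_congr rfl fun l _ => ?_
  rw [← mul_sum, sum_Ico_eq_sum_range, add_tsub_cancel_right]
  simp only [add_comm 1, add_tsub_cancel_right, sum_range_sub']

theorem sum_Ico_tail_mul_shift (f c : ℕ → R) {k n : ℕ} (hkn : k ≤ n) :
    ∑ j ∈ Ico 1 k, (∑ l ∈ Ico j k, f l) * c (n + 1 - j + 1)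
      = (∑ l ∈ Ico 1 k, f l) * c (n + 1)
        + ∑ j ∈ Ico 1 k, (∑ l ∈ Ico j k, f l) * c (n - j + 1)
        - ∑ j ∈ Ico 1 k, f j * c (n - j + 1) := by
  have key := sum_Ico_tail_mul_pred_sub f (fun j => c (n - j + 1)) k
  have hidx : ∀ j ∈ Ico 1 k, n - (j - 1) + 1 = n + 1 - j + 1 := fun j hj => by
    have := mem_Ico.1 hj
    omega
  rw [sum_congr rfl fun j hj => by rw [hidx j hj]] at key
  simp only [mul_sub, sum_sub_distrib, ← sum_mul, Nat.sub_zero] at key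
  linear_combination key

end TailSums

theorem stmt_6_general (k : ℕ)
    (Cs : ℕ → ℝ)
    (Cbar : ℕ → ℝ) (hCbar : ∀ j, Cbar j = ∑ l ∈ Finset.Ico j k, Cs l)
    (CL C1 C2 C3 C4 A : ℝ)
    (hcond1 : CL * C3 * Cbar 1 ≤ 1 - CL * (C3 + C1 * Cbar 0))
    (hcond2 : CL * C4 * Cbar 1 ≤ A - CL * (C4 + C2 * Cbar 0))
    (E a b : ℕ → ℝ) (ha : ∀ n, 0 ≤ a n) (hb : ∀ n, 0 ≤ b n)
    (hstep : ∀ n, k ≤ n →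
      E (n + 1) - E n + a (n + 1) + A * b (n + 1) ≤
        CL * (C3 + C1 * Cbar 0) * a (n + 1) + CL * (C4 + C2 * Cbar 0) * b (n + 1)
          + CL * C3 * ∑ j ∈ Finset.Ico 1 k, Cs j * a (n - j + 1)
          + CL * C4 * ∑ j ∈ Finset.Ico 1 k, Cs j * b (n - j + 1)) :
    ∀ n, k ≤ n →
      E (n + 1) + CL * C3 * ∑ j ∈ Finset.Ico 1 k, Cbar j * a (n + 1 - j + 1)
          + CL * C4 * ∑ j ∈ Finset.Ico 1 k, Cbar j * b (n + 1 - j + 1)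
        ≤ E n + CL * C3 * ∑ j ∈ Finset.Ico 1 k, Cbar j * a (n - j + 1)
          + CL * C4 * ∑ j ∈ Finset.Ico 1 k, Cbar j * b (n - j + 1) := by
  intro n hn
  obtain rfl : Cbar = fun j => ∑ l ∈ Ico j k, Cs l := funext hCbar
  rw [sum_Ico_tail_mul_shift Cs a hn, sum_Ico_tail_mul_shift Cs b hn]
  have absorb_a := mul_le_mul_of_nonneg_right hcond1 (ha (n + 1))
  have absorb_b := mul_le_mul_of_nonneg_right hcond2 (hb (n + 1))
  linear_combination hstep n hn + absorb_a + absorb_b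

/-- Discrete core of Theorem 3.3 (unconditional energy stability): under the per-step
energy estimate (3.31) and the constant conditions (3.22)–(3.23), the modified energy
`Ẽₙ = Eₙ + C_L C₃ Σⱼ C̄ⱼ a_{n-j+1} + C_L C₄ Σⱼ C̄ⱼ b_{n-j+1}` decreases monotonically.
Here `Cs j` stands for C*ⱼ and `Cbar j = Σ_{l=j}^{k-1} Cs l` for C̄ⱼ. -/
theorem stmt_6 (k : ℕ) (hk : 1 ≤ k)
    (Cs : ℕ → ℝ) (hCs : ∀ j < k, 0 ≤ Cs j) (hCs0 : Cs 0 = 1)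
    (Cbar : ℕ → ℝ) (hCbar : ∀ j, Cbar j = ∑ l ∈ Finset.Ico j k, Cs l)
    (CL C1 C2 C3 C4 A : ℝ)
    (hCL : 0 ≤ CL) (hC1 : 0 ≤ C1) (hC2 : 0 ≤ C2) (hC3 : 0 ≤ C3) (hC4 : 0 ≤ C4)
    (hA : 0 ≤ A)
    (hcond1 : CL * C3 * Cbar 1 ≤ 1 - CL * (C3 + C1 * Cbar 0))
    (hcond2 : CL * C4 * Cbar 1 ≤ A - CL * (C4 + C2 * Cbar 0))
    (E a b : ℕ → ℝ) (ha : ∀ n, 0 ≤ a n) (hb : ∀ n, 0 ≤ b n)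
    (hstep : ∀ n, k ≤ n →
      E (n + 1) - E n + a (n + 1) + A * b (n + 1) ≤
        CL * (C3 + C1 * Cbar 0) * a (n + 1) + CL * (C4 + C2 * Cbar 0) * b (n + 1)
          + CL * C3 * ∑ j ∈ Finset.Ico 1 k, Cs j * a (n - j + 1)
          + CL * C4 * ∑ j ∈ Finset.Ico 1 k, Cs j * b (n - j + 1)) :
    ∀ n, k ≤ n →
      E (n + 1) + CL * C3 * ∑ j ∈ Finset.Ico 1 k, Cbar j * a (n + 1 - j + 1)
          + CL * C4 * ∑ j ∈ Finset.Ico 1 k, Cbar j * b (n + 1 - j + 1)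
        ≤ E n + CL * C3 * ∑ j ∈ Finset.Ico 1 k, Cbar j * a (n - j + 1)
          + CL * C4 * ∑ j ∈ Finset.Ico 1 k, Cbar j * b (n - j + 1) :=
  stmt_6_general k Cs Cbar hCbar CL C1 C2 C3 C4 A hcond1 hcond2 E a b ha hb hstep
end

section
/- Let k ≥ 2 be an integer, r ≥ 1 and τ > 0 real numbers, and let h₁, …, h_{k−1} be real numbers with τ/r ≤ hⱼ ≤ τ for each j. Define nodes s₀ = 0 and sᵢ = −(h₁ + ⋯ + hᵢ) for 1 ≤ i ≤ k−1, and let ℓᵢ be the associated Lagrange basis polynomials ℓᵢ(s) = ∏_{m≠i} (s − s_m)/(sᵢ − s_m). Then there exists a constant C depending only on k and r (and not on τ or the hⱼ) such that for every 0 ≤ i ≤ k−1 and every 0 ≤ j ≤ k−1, the coefficient ξ_{i,j} of s^j in ℓᵢ satisfies |ξ_{i,j}| ≤ C·τ^{−j}. -/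
/-!
Write `ℓᵢ = wᵢ · ∏_{m ≠ i} (s - s_m)` with the barycentric weight `wᵢ = ∏_{m ≠ i} (sᵢ - s_m)⁻¹`.
Distinct nodes are at least `τ/r` apart, so `|wᵢ| ≤ (r/τ)^(k-1)`; all nodes lie in
`[-(k-1)τ, 0]`, so by Vieta the coefficient of `s^j` in the nodal product is at most
`C(k-1, j) ((k-1)τ)^(k-1-j)`. In the product the powers of `τ` combine to `τ^(-j)`, and
`C(k-1, j) (k-1)^(k-1-j) ≤ k^(k-1)` is one term of the binomial expansion of
`((k-1) + 1)^(k-1)`, which gives `C = (k r)^(k-1)`.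
-/

open Polynomial Finset

theorem Nat.choose_mul_pow_le_succ_pow (n j : ℕ) : n.choose j * n ^ (n - j) ≤ (n + 1) ^ n := by
  rcases le_or_gt j n with hj | hj
  · calc n.choose j * n ^ (n - j) = n ^ (n - j) * 1 ^ (n - (n - j)) * n.choose (n - j) := by
          rw [Nat.choose_symm hj, one_pow, mul_one, mul_comm]
      _ ≤ ∑ m ∈ range (n + 1), n ^ m * 1 ^ (n - m) * n.choose m :=
          single_le_sum (f := fun m => n ^ m * 1 ^ (n - m) * n.choose m) (fun _ _ => Nat.zero_le _)
            (mem_range.2 (Nat.lt_succ_of_le (Nat.sub_le n j)))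
      _ = (n + 1) ^ n := (add_pow _ _ _).symm
  · simp [Nat.choose_eq_zero_of_lt hj]

theorem choose_mul_mul_pow_div_pow_le {n j : ℕ} {τ r : ℝ} (hτ : 0 < τ) (hr : 0 ≤ r)
    (hj : j ≤ n) :
    n.choose j * (n * τ) ^ (n - j) / (τ / r) ^ n ≤ ((n + 1) * r) ^ n / τ ^ j := by
  have hτn : τ ^ n = τ ^ (n - j) * τ ^ j := by rw [← pow_add, Nat.sub_add_cancel hj]
  calc (n.choose j : ℝ) * (n * τ) ^ (n - j) / (τ / r) ^ n
      = (n.choose j * n ^ (n - j) : ℕ) * r ^ n / τ ^ j := by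
        rw [mul_pow, div_pow, hτn]; push_cast; field_simp
    _ ≤ ((n + 1) ^ n : ℕ) * r ^ n / τ ^ j := by
        gcongr
        exact Nat.choose_mul_pow_le_succ_pow n j
    _ = ((n + 1) * r) ^ n / τ ^ j := by rw [mul_pow]; push_cast; ring

namespace Lagrange

variable {ι : Type*}

section Field

variable {F : Type*} [Field F] [DecidableEq ι]

theorem basis_eq_C_nodalWeight_mul_nodal_erase (s : Finset ι) (v : ι → F) (i : ι) :
    Lagrange.basis s v i = C (nodalWeight s v i) * nodal (s.erase i) v := by
  simp_rw [Lagrange.basis, basisDivisor, nodalWeight, prod_mul_distrib, map_prod, nodal]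

end Field

variable {𝕜 : Type*} [NormedField 𝕜] {s : Finset ι} {v : ι → 𝕜} {i : ι} {A δ : ℝ}

theorem norm_coeff_nodal_le (hA : ∀ i ∈ s, ‖v i‖ ≤ A) (j : ℕ) :
    ‖(nodal s v).coeff j‖ ≤ (#s).choose j * A ^ (#s - j) := by
  rcases le_or_gt j #s with hj | hj
  · have hA0 : ∀ i ∈ s, ‖-v i‖ ≤ A := by simpa using hA
    simp_rw [nodal, sub_eq_add_neg, ← map_neg C]
    rw [prod_X_add_C_coeff s _ hj, ← Nat.choose_symm hj, ← card_powersetCard, ← nsmul_eq_mul]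
    refine (norm_sum_le _ _).trans (sum_le_card_nsmul _ _ _ fun t ht => ?_)
    obtain ⟨hts, htcard⟩ := mem_powersetCard.1 ht
    rw [norm_prod, ← htcard, ← prod_const]
    exact prod_le_prod (fun _ _ => norm_nonneg _) fun i hi => hA0 i (hts hi)
  · rw [coeff_eq_zero_of_natDegree_lt (natDegree_nodal (v := v) ▸ hj)]
    simp [Nat.choose_eq_zero_of_lt hj]

variable [DecidableEq ι]

theorem norm_nodalWeight_le (hδ : 0 < δ) (hsep : ∀ m ∈ s.erase i, δ ≤ ‖v i - v m‖) :
    ‖nodalWeight s v i‖ ≤ (δ ^ #(s.erase i))⁻¹ := by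
  rw [nodalWeight, norm_prod, ← inv_pow, ← prod_const]
  refine prod_le_prod (fun _ _ => norm_nonneg _) fun m hm => ?_
  rw [norm_inv]
  exact inv_anti₀ hδ (hsep m hm)

theorem norm_coeff_basis_le (hi : i ∈ s) (hA : ∀ m ∈ s, ‖v m‖ ≤ A) (hδ : 0 < δ)
    (hsep : ∀ m ∈ s, m ≠ i → δ ≤ ‖v i - v m‖) (j : ℕ) :
    ‖(Lagrange.basis s v i).coeff j‖ ≤
      (#s - 1).choose j * A ^ (#s - 1 - j) / δ ^ (#s - 1) := by
  rw [basis_eq_C_nodalWeight_mul_nodal_erase, coeff_C_mul, norm_mul, div_eq_inv_mul,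
    ← card_erase_of_mem hi]
  refine mul_le_mul (norm_nodalWeight_le hδ fun m hm => hsep m (mem_of_mem_erase hm)
    (ne_of_mem_erase hm)) (norm_coeff_nodal_le (fun m hm => hA m (mem_of_mem_erase hm)) j)
    (norm_nonneg _) (by positivity)

end Lagrange

def stepNodes (h : ℕ → ℝ) (m : ℕ) : ℝ := -(∑ l ∈ Icc 1 m, h l)

section StepNodes

variable {h : ℕ → ℝ} {i m : ℕ}

theorem stepNodes_sub_stepNodes (him : i ≤ m) :
    stepNodes h i - stepNodes h m = ∑ l ∈ Ioc i m, h l := by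
  have hIoc (n : ℕ) : Icc 1 n = Ioc 0 n := Icc_add_one_left_eq_Ioc 0 n
  rw [stepNodes, stepNodes, hIoc, hIoc, ← sum_Ioc_consecutive h (Nat.zero_le i) him]
  ring

theorem abs_stepNodes_le {τ : ℝ} (hh : ∀ l ∈ Icc 1 m, 0 ≤ h l ∧ h l ≤ τ) :
    |stepNodes h m| ≤ m * τ := by
  rw [stepNodes, abs_neg, abs_of_nonneg (sum_nonneg fun l hl => (hh l hl).1)]
  simpa using sum_le_card_nsmul _ _ _ fun l hl => (hh l hl).2

theorem le_abs_stepNodes_sub {δ : ℝ} (him : i ≠ m) (hδ : 0 ≤ δ)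
    (hh : ∀ l ∈ Icc 1 (max i m), δ ≤ h l) : δ ≤ |stepNodes h i - stepNodes h m| := by
  wlog hlt : i < m generalizing i m
  · rw [abs_sub_comm, max_comm] at *
    exact this (Ne.symm him) hh (by omega)
  have hpos : ∀ l ∈ Ioc i m, δ ≤ h l := fun l hl => hh l (by simp at hl ⊢; omega)
  rw [stepNodes_sub_stepNodes hlt.le]
  calc δ ≤ h m := hpos m (by simp [hlt])
    _ ≤ ∑ l ∈ Ioc i m, h l :=
        single_le_sum (fun l hl => hδ.trans (hpos l hl)) (by simp [hlt])
    _ ≤ _ := le_abs_self _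

end StepNodes

theorem stmt_7_general (k : ℕ) (r : ℝ) (hr : 1 ≤ r) :
    ∃ C : ℝ, ∀ (τ : ℝ), 0 < τ → ∀ (h : ℕ → ℝ),
      (∀ j, 1 ≤ j → j ≤ k - 1 → τ / r ≤ h j ∧ h j ≤ τ) →
      ∀ i < k, ∀ j < k,
        |(Lagrange.basis (Finset.range k)
            (fun m => -(∑ l ∈ Finset.Icc 1 m, h l)) i).coeff j| ≤ C / τ ^ j := by
  refine ⟨(k * r) ^ (k - 1), fun τ hτ h hh i hi j hj => ?_⟩
  obtain ⟨n, rfl⟩ : ∃ n, k = n + 1 := ⟨k - 1, by omega⟩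
  have hδ : 0 < τ / r := div_pos hτ (by linarith)
  have hstep : ∀ l ∈ Icc 1 n, τ / r ≤ h l ∧ h l ≤ τ := fun l hl => by
    simp only [mem_Icc] at hl
    exact hh l hl.1 (by omega)
  have hnodes : ∀ m ∈ range (n + 1), ‖stepNodes h m‖ ≤ n * τ := fun m hm => by
    have hmn : m ≤ n := Nat.lt_succ_iff.1 (mem_range.1 hm)
    refine (abs_stepNodes_le fun l hl => ?_).trans (by gcongr)
    have := hstep l (Icc_subset_Icc_right hmn hl)
    exact ⟨hδ.le.trans this.1, this.2⟩
  have hsep : ∀ m ∈ range (n + 1), m ≠ i → τ / r ≤ ‖stepNodes h i - stepNodes h m‖ :=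
    fun m hm hmi => le_abs_stepNodes_sub (Ne.symm hmi) hδ.le fun l hl =>
      (hstep l (Icc_subset_Icc_right (by simp at hm; omega) hl)).1
  have hbound := Lagrange.norm_coeff_basis_le (mem_range.2 hi) hnodes hδ hsep j
  rw [card_range, Nat.add_sub_cancel] at hbound
  refine hbound.trans ?_
  rw [Nat.add_sub_cancel, Nat.cast_add_one]
  exact choose_mul_mul_pow_div_pow_le hτ (by linarith) (by omega)

/-- The coefficient bound ξ_{i,j} = O(τ^{-j}) asserted after (3.3): for the shifted
variable-step Lagrange basis polynomials with nodes `s₀ = 0`, `sᵢ = -(h₁ + ⋯ + hᵢ)`,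
every coefficient of `ℓᵢ` in `s^j` is bounded by `C·τ^{-j}` with `C = C(k, r)`
independent of `τ` and of the step sizes `hⱼ`. -/
theorem stmt_7 (k : ℕ) (hk : 2 ≤ k) (r : ℝ) (hr : 1 ≤ r) :
    ∃ C : ℝ, ∀ (τ : ℝ), 0 < τ → ∀ (h : ℕ → ℝ),
      (∀ j, 1 ≤ j → j ≤ k - 1 → τ / r ≤ h j ∧ h j ≤ τ) →
      ∀ i < k, ∀ j < k,
        |(Lagrange.basis (Finset.range k)
            (fun m => -(∑ l ∈ Finset.Icc 1 m, h l)) i).coeff j| ≤ C / τ ^ j :=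
  stmt_7_general k r hr
end

section
/- Let k ≥ 2 be an integer, r ≥ 1 and τ > 0 real numbers, and let h₁, …, h_{k−1} be real numbers with τ/r ≤ hⱼ ≤ τ for each j. Define nodes s₀ = 0 and sᵢ = −(h₁ + ⋯ + hᵢ) for 1 ≤ i ≤ k−1, and let ℓᵢ be the associated Lagrange basis polynomials ℓᵢ(s) = ∏_{m≠i} (s − s_m)/(sᵢ − s_m). Then for every 0 ≤ i ≤ k−1 and every s ∈ [0, τ], one has |ℓᵢ(s)| ≤ (k·r)^{k−1}. -/
/-! Each Lagrange basis polynomial is a product of `k - 1` factors `(s - sⱼ) / (sᵢ - sⱼ)`.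
Distinct nodes are at least one step, hence at least `τ / r`, apart, while every node lies
within `(k - 1) τ` to the left of `0`, so `|s - sⱼ| ≤ k τ` on `[0, τ]`. Every factor is therefore
bounded by `k τ / (τ / r) = k r`. -/

open Finset Polynomial

section

variable {F : Type*} [Field F] [LinearOrder F] [IsStrictOrderedRing F]

namespace Lagrange

theorem abs_eval_basisDivisor_le {a b x δ M : F} (hδ : 0 < δ) (hab : δ ≤ |a - b|)
    (hx : |x - b| ≤ M) : |eval x (basisDivisor a b)| ≤ M / δ := by
  simp only [basisDivisor, eval_mul, eval_C, eval_sub, eval_X, abs_mul, abs_inv]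
  rw [div_eq_inv_mul]
  exact mul_le_mul (inv_anti₀ hδ hab) hx (abs_nonneg _) (inv_nonneg.2 hδ.le)

theorem abs_eval_basis_le_pow {ι : Type*} [DecidableEq ι] {s : Finset ι} {v : ι → F} {i : ι}
    (hi : i ∈ s) {x δ M : F} (hδ : 0 < δ) (hsep : ∀ j ∈ s, j ≠ i → δ ≤ |v i - v j|)
    (hx : ∀ j ∈ s, |x - v j| ≤ M) : |eval x (Lagrange.basis s v i)| ≤ (M / δ) ^ (#s - 1) := by
  rw [Lagrange.basis, eval_prod, abs_prod, ← card_erase_of_mem hi, ← prod_const]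
  exact prod_le_prod (fun _ _ => abs_nonneg _) fun j hj =>
    abs_eval_basisDivisor_le hδ (hsep j (mem_of_mem_erase hj) (ne_of_mem_erase hj))
      (hx j (mem_of_mem_erase hj))

end Lagrange

theorem sum_Icc_one_le_mul {h : ℕ → F} {m : ℕ} {c : F} (hc : ∀ l ∈ Icc 1 m, h l ≤ c) :
    ∑ l ∈ Icc 1 m, h l ≤ m * c := by
  simpa using sum_le_card_nsmul _ _ _ hc

theorem le_sum_Icc_one_sub_sum_Icc_one {h : ℕ → F} {a b : ℕ} (hab : a < b)
    (hnonneg : ∀ l ∈ Ioc a b, 0 ≤ h l) :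
    h b ≤ ∑ l ∈ Icc 1 b, h l - ∑ l ∈ Icc 1 a, h l := by
  have hIcc (m : ℕ) : Icc 1 m = Ioc 0 m := rfl
  rw [hIcc, hIcc, ← sum_Ioc_consecutive h (Nat.zero_le a) hab.le, add_sub_cancel_left]
  exact single_le_sum hnonneg (right_mem_Ioc.2 hab)

theorem le_abs_sum_Icc_one_sub_sum_Icc_one {h : ℕ → F} {n a b : ℕ} {δ : F} (hδ : 0 ≤ δ)
    (hstep : ∀ l ∈ Icc 1 n, δ ≤ h l) (ha : a ≤ n) (hb : b ≤ n) (hab : a ≠ b) :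
    δ ≤ |∑ l ∈ Icc 1 a, h l - ∑ l ∈ Icc 1 b, h l| := by
  wlog hlt : a < b generalizing a b
  · rw [abs_sub_comm]
    exact this hb ha hab.symm (by omega)
  have hstep' : ∀ l ∈ Ioc a b, δ ≤ h l := fun l hl =>
    hstep l (mem_Icc.2 ⟨by grind, by grind⟩)
  calc δ ≤ h b := hstep' b (right_mem_Ioc.2 hlt)
    _ ≤ ∑ l ∈ Icc 1 b, h l - ∑ l ∈ Icc 1 a, h l :=
      le_sum_Icc_one_sub_sum_Icc_one hlt fun l hl => hδ.trans (hstep' l hl)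
    _ ≤ _ := by rw [abs_sub_comm]; exact le_abs_self _

end

theorem stmt_8_general (k : ℕ) (r : ℝ) (hr : 1 ≤ r)
    (τ : ℝ) (hτ : 0 < τ) (h : ℕ → ℝ)
    (hstep : ∀ j, 1 ≤ j → j ≤ k - 1 → τ / r ≤ h j ∧ h j ≤ τ) :
    ∀ i < k, ∀ s : ℝ, 0 ≤ s → s ≤ τ →
      |Polynomial.eval s (Lagrange.basis (Finset.range k)
          (fun m => -(∑ l ∈ Finset.Icc 1 m, h l)) i)| ≤ ((k : ℝ) * r) ^ (k - 1) := by
  intro i hi s hs0 hsτ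
  have hr0 : 0 < r := one_pos.trans_le hr
  have hδ : 0 < τ / r := div_pos hτ hr0
  have hstep' : ∀ l ∈ Icc 1 (k - 1), τ / r ≤ h l ∧ h l ≤ τ := fun l hl =>
    hstep l (mem_Icc.1 hl).1 (mem_Icc.1 hl).2
  have hsep : ∀ j ∈ range k, j ≠ i →
      τ / r ≤ |-(∑ l ∈ Icc 1 i, h l) - -(∑ l ∈ Icc 1 j, h l)| := fun j hj hji => by
    rw [neg_sub_neg]
    exact le_abs_sum_Icc_one_sub_sum_Icc_one hδ.le (fun l hl => (hstep' l hl).1)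
      (by grind) (by omega) hji
  have hdist : ∀ j ∈ range k, |s - -(∑ l ∈ Icc 1 j, h l)| ≤ k * τ := fun j hj => by
    have hjk : (j : ℝ) + 1 ≤ k := by exact_mod_cast mem_range.1 hj
    have hj : ∀ l ∈ Icc 1 j, τ / r ≤ h l ∧ h l ≤ τ := fun l hl =>
      hstep' l (mem_Icc.2 ⟨(mem_Icc.1 hl).1, by grind⟩)
    have hS0 : 0 ≤ ∑ l ∈ Icc 1 j, h l := sum_nonneg fun l hl => hδ.le.trans (hj l hl).1
    have hS : ∑ l ∈ Icc 1 j, h l ≤ j * τ := sum_Icc_one_le_mul fun l hl => (hj l hl).2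
    rw [sub_neg_eq_add, abs_of_nonneg (by positivity)]
    nlinarith
  have hbound := Lagrange.abs_eval_basis_le_pow (mem_range.2 hi) hδ hsep hdist
  rwa [card_range, show (k : ℝ) * τ / (τ / r) = k * r by field_simp] at hbound

/-- The footnote of Section 3.1: the Lagrange basis polynomials with nodes `s₀ = 0`,
`sᵢ = -(h₁ + ⋯ + hᵢ)`, where `τ/r ≤ hⱼ ≤ τ`, are uniformly bounded by `(k·r)^{k-1}`
on the extrapolation interval `[0, τ]`. -/
theorem stmt_8 (k : ℕ) (hk : 2 ≤ k) (r : ℝ) (hr : 1 ≤ r)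
    (τ : ℝ) (hτ : 0 < τ) (h : ℕ → ℝ)
    (hstep : ∀ j, 1 ≤ j → j ≤ k - 1 → τ / r ≤ h j ∧ h j ≤ τ) :
    ∀ i < k, ∀ s : ℝ, 0 ≤ s → s ≤ τ →
      |Polynomial.eval s (Lagrange.basis (Finset.range k)
          (fun m => -(∑ l ∈ Finset.Icc 1 m, h l)) i)| ≤ ((k : ℝ) * r) ^ (k - 1) :=
  stmt_8_general k r hr τ hτ h hstep
end

section
/- Let k ≥ 2 be an integer, r ≥ 1 and τ > 0 real numbers, and let h₁, …, h_{k−1} be real numbers with τ/r ≤ hⱼ ≤ τ for each j. Define nodes s₀ = 0 and sᵢ = −(h₁ + ⋯ + hᵢ) for 1 ≤ i ≤ k−1, and let ℓᵢ be the associated Lagrange basis polynomials ℓᵢ(s) = ∏_{m≠i} (s − s_m)/(sᵢ − s_m). Then there exist constants C*₁, …, C*_{k−1} depending only on k and r (and not on τ, the hⱼ, or τ₀) such that for every real τ₀ with 0 < τ₀ ≤ τ and every 1 ≤ j ≤ k−1: (∫₀^{τ₀} (1 − Σ_{i=0}^{j−1} ℓᵢ(s))² ds)^{1/2} ≤ C*ⱼ·τ^{1/2}.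 -/
/-!
On `[0, τ]` each factor `(x - s_m) / (s_i - s_m)` of `ℓᵢ` is bounded by `kτ / (τ/r) = kr`: the
nodes are at least `τ/r` apart and lie in `[-(k-1)τ, 0]`. Hence `|ℓᵢ| ≤ (kr)^(k-1)` there, the
tail `1 - Σ_{i<j} ℓᵢ` is bounded by `C*ⱼ = 1 + j (kr)^(k-1)`, and its L² norm over `[0, τ₀]` is
at most `C*ⱼ τ₀^(1/2) ≤ C*ⱼ τ^(1/2)`.
-/

open Finset Polynomial

theorem norm_eval_basis_le {F ι : Type*} [NormedField F] [DecidableEq ι] {s : Finset ι}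
    {v : ι → F} {i : ι} {x : F} {A δ : ℝ} (hi : i ∈ s) (hδ : 0 < δ)
    (hsep : ∀ m ∈ s.erase i, δ ≤ ‖v i - v m‖) (hx : ∀ m ∈ s.erase i, ‖x - v m‖ ≤ A) :
    ‖(Lagrange.basis s v i).eval x‖ ≤ (A / δ) ^ (#s - 1) := by
  have hfactor : ∀ m ∈ s.erase i, ‖(Lagrange.basisDivisor (v i) (v m)).eval x‖ ≤ A / δ := by
    intro m hm
    simp only [Lagrange.basisDivisor, eval_mul, eval_C, eval_sub, eval_X, ← div_eq_inv_mul,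
      norm_div]
    exact div_le_div₀ ((norm_nonneg _).trans (hx m hm)) (hx m hm) hδ (hsep m hm)
  calc ‖(Lagrange.basis s v i).eval x‖
      = ∏ m ∈ s.erase i, ‖(Lagrange.basisDivisor (v i) (v m)).eval x‖ := by
        rw [Lagrange.basis, eval_prod, norm_prod]
    _ ≤ ∏ _m ∈ s.erase i, A / δ := prod_le_prod (fun _ _ => norm_nonneg _) hfactor
    _ = (A / δ) ^ (#s - 1) := by rw [prod_const, card_erase_of_mem hi]

theorem le_abs_sum_Icc_sub_sum_Icc {h : ℕ → ℝ} {δ : ℝ} {n i m : ℕ} (hδ : 0 ≤ δ)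
    (hh : ∀ l, 1 ≤ l → l ≤ n → δ ≤ h l) (hi : i ≤ n) (hm : m ≤ n) (him : i ≠ m) :
    δ ≤ |∑ l ∈ Icc 1 i, h l - ∑ l ∈ Icc 1 m, h l| := by
  wlog hlt : i < m generalizing i m
  · rw [abs_sub_comm]; exact this hm hi him.symm (by omega)
  have hsplit : ∑ l ∈ Icc 1 m, h l = ∑ l ∈ Icc 1 i, h l + ∑ l ∈ Ioc i m, h l := by
    have hIcc : ∀ p, Icc 1 p = Ioc 0 p := Icc_add_one_left_eq_Ioc 0
    rw [hIcc, hIcc]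
    exact (sum_Ioc_consecutive _ (Nat.zero_le i) hlt.le).symm
  have hstep : δ ≤ ∑ l ∈ Ioc i m, h l :=
    (hh (i + 1) (by omega) (by omega)).trans <| single_le_sum
      (fun l hl => hδ.trans (hh l (by simp at hl; omega) (by simp at hl; omega)))
      (by simp; omega)
  rw [abs_sub_comm, hsplit, add_sub_cancel_left]
  exact hstep.trans (le_abs_self _)

theorem integral_sq_rpow_half_le_of_abs_le {f : ℝ → ℝ} {a b B : ℝ} (hab : a ≤ b)
    (hf : IntervalIntegrable (fun x => f x ^ 2) MeasureTheory.volume a b)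
    (hB : 0 ≤ B) (hfB : ∀ x ∈ Set.Icc a b, |f x| ≤ B) :
    (∫ x in a..b, f x ^ 2) ^ ((1:ℝ)/2) ≤ B * (b - a) ^ ((1:ℝ)/2) := by
  have hint : ∫ x in a..b, f x ^ 2 ≤ B ^ 2 * (b - a) := by
    calc ∫ x in a..b, f x ^ 2 ≤ ∫ _ in a..b, B ^ 2 :=
          intervalIntegral.integral_mono_on hab hf intervalIntegrable_const fun x hx =>
            sq_le_sq' (abs_le.mp (hfB x hx)).1 (abs_le.mp (hfB x hx)).2
      _ = B ^ 2 * (b - a) := by simp [mul_comm]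
  rw [← Real.sqrt_eq_rpow, ← Real.sqrt_eq_rpow]
  calc √(∫ x in a..b, f x ^ 2) ≤ √(B ^ 2 * (b - a)) := Real.sqrt_le_sqrt hint
    _ = B * √(b - a) := by rw [Real.sqrt_mul (sq_nonneg B), Real.sqrt_sq hB]

theorem abs_eval_basis_le_of_steps {k i : ℕ} {r τ x : ℝ} {h : ℕ → ℝ} (hr : 0 < r) (hτ : 0 < τ)
    (hh : ∀ j, 1 ≤ j → j ≤ k - 1 → τ / r ≤ h j ∧ h j ≤ τ) (hx : x ∈ Set.Icc 0 τ) (hi : i < k) :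
    |(Lagrange.basis (range k) (fun m => -(∑ l ∈ Icc 1 m, h l)) i).eval x| ≤ (k * r) ^ (k - 1) := by
  have hsep : ∀ m ∈ (range k).erase i,
      τ / r ≤ ‖-(∑ l ∈ Icc 1 i, h l) - -(∑ l ∈ Icc 1 m, h l)‖ := by
    intro m hm
    rw [mem_erase, mem_range] at hm
    rw [Real.norm_eq_abs, neg_sub_neg, abs_sub_comm]
    exact le_abs_sum_Icc_sub_sum_Icc (by positivity) (fun l hl₁ hl₂ => (hh l hl₁ hl₂).1)
      (by omega) (by omega) (Ne.symm hm.1)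
  have hdist : ∀ m ∈ (range k).erase i, ‖x - -(∑ l ∈ Icc 1 m, h l)‖ ≤ k * τ := by
    intro m hm
    rw [mem_erase, mem_range] at hm
    have hsteps : ∀ l ∈ Icc 1 m, τ / r ≤ h l ∧ h l ≤ τ := fun l hl => by
      rw [mem_Icc] at hl; exact hh l hl.1 (by omega)
    have hlower : 0 ≤ ∑ l ∈ Icc 1 m, h l :=
      sum_nonneg fun l hl => (div_pos hτ hr).le.trans (hsteps l hl).1
    have hupper : ∑ l ∈ Icc 1 m, h l ≤ m * τ := by
      simpa using sum_le_card_nsmul _ _ _ fun l hl => (hsteps l hl).2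
    have hmk : (m : ℝ) + 1 ≤ k := by exact_mod_cast hm.2
    rw [Real.norm_eq_abs, sub_neg_eq_add, abs_of_nonneg (by linarith [hx.1])]
    nlinarith [hx.2]
  have hratio : k * τ / (τ / r) = k * r := by field_simp
  simpa only [Real.norm_eq_abs, hratio, card_range] using
    norm_eval_basis_le (mem_range.mpr hi) (div_pos hτ hr) hsep hdist

theorem stmt_9_general (k : ℕ) (r : ℝ) (hr : 1 ≤ r) :
    ∃ Cs : ℕ → ℝ, ∀ (τ : ℝ), 0 < τ → ∀ (h : ℕ → ℝ),
      (∀ j, 1 ≤ j → j ≤ k - 1 → τ / r ≤ h j ∧ h j ≤ τ) →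
      ∀ (τ₀ : ℝ), 0 < τ₀ → τ₀ ≤ τ →
      ∀ j, 1 ≤ j → j ≤ k - 1 →
        (∫ s in (0:ℝ)..τ₀,
            (1 - ∑ i ∈ Finset.range j,
              Polynomial.eval s (Lagrange.basis (Finset.range k)
                (fun m => -(∑ l ∈ Finset.Icc 1 m, h l)) i)) ^ 2) ^ ((1:ℝ)/2)
          ≤ Cs j * τ ^ ((1:ℝ)/2) := by
  refine ⟨fun j => 1 + j * (k * r) ^ (k - 1), ?_⟩
  intro τ hτ h hh τ₀ hτ₀ hτ₀τ j _ hjk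
  have hr₀ : 0 < r := by linarith
  refine (integral_sq_rpow_half_le_of_abs_le (B := 1 + j * (k * r) ^ (k - 1)) hτ₀.le
    (Continuous.intervalIntegrable (by fun_prop) _ _) (by positivity) fun x hx => ?_).trans ?_
  · calc |1 - ∑ i ∈ range j, (Lagrange.basis (range k) (fun m => -(∑ l ∈ Icc 1 m, h l)) i).eval x|
        ≤ 1 + ∑ i ∈ range j,
            |(Lagrange.basis (range k) (fun m => -(∑ l ∈ Icc 1 m, h l)) i).eval x| :=
          (abs_sub _ _).trans (by rw [abs_one]; gcongr; exact abs_sum_le_sum_abs _ _)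
      _ ≤ 1 + ∑ _i ∈ range j, ((k : ℝ) * r) ^ (k - 1) := by
          gcongr with i hi
          exact abs_eval_basis_le_of_steps hr₀ hτ hh ⟨hx.1, hx.2.trans hτ₀τ⟩
            (by rw [mem_range] at hi; omega)
      _ = 1 + j * (k * r) ^ (k - 1) := by simp
  · rw [sub_zero]
    gcongr

/-- Estimate (3.18): the L²(0, τ₀) norms of the partial Lagrange-basis tails
`1 - Σ_{i<j} ℓᵢ(s)` are bounded by `C*ⱼ·τ^{1/2}`, with constants `C*ⱼ = Cs j`
depending only on `k` and `r`, independent of `τ`, of the step sizes `hⱼ`,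
and of the current step size `τ₀ ≤ τ`. Nodes: `s₀ = 0`, `sᵢ = -(h₁ + ⋯ + hᵢ)`. -/
theorem stmt_9 (k : ℕ) (hk : 2 ≤ k) (r : ℝ) (hr : 1 ≤ r) :
    ∃ Cs : ℕ → ℝ, ∀ (τ : ℝ), 0 < τ → ∀ (h : ℕ → ℝ),
      (∀ j, 1 ≤ j → j ≤ k - 1 → τ / r ≤ h j ∧ h j ≤ τ) →
      ∀ (τ₀ : ℝ), 0 < τ₀ → τ₀ ≤ τ →
      ∀ j, 1 ≤ j → j ≤ k - 1 →
        (∫ s in (0:ℝ)..τ₀,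
            (1 - ∑ i ∈ Finset.range j,
              Polynomial.eval s (Lagrange.basis (Finset.range k)
                (fun m => -(∑ l ∈ Finset.Icc 1 m, h l)) i)) ^ 2) ^ ((1:ℝ)/2)
          ≤ Cs j * τ ^ ((1:ℝ)/2) :=
  stmt_9_general k r hr
end

section
/- Let k ≥ 1 be an integer and K ≥ 0, B ≥ 0, r ≥ 1 real numbers. Let τ : ℕ → ℝ be a sequence of positive step sizes satisfying the local ratio bound τₙ ≤ r·τ_m for all n, m with |n − m| ≤ k−1, and let w : ℕ → ℝ be a nonnegative sequence such that wⱼ ≤ B for all 0 ≤ j ≤ k−1 and, for every m ≥ k−1, w_{m+1} ≤ B + K·Σ_{n=k−1}^{m} τₙ·(Σ_{i=0}^{k−1} w_{n−i}). Then for every m ≥ 0: w_m ≤ B·exp(k·r·K·Σ_{j=0}^{m−1} τⱼ). -/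
/-!
Comparison with the exponential supersolution `E m = B·exp(c·Σ_{j<m} τⱼ)`, `c = k·r·K`.
By strong induction every history value `w_{n-i}` is at most `E n` (as `E` is monotone), so the
recursion gives `w_{m+1} ≤ B + k·K·Σ_{n} τₙ E n`. Since `x·e^a ≤ e^{a+x} - e^a`, the terms
`c·τₙ·E n` are dominated by the increments `E (n+1) - E n`, and the sum telescopes to at most
`E (m+1) - B`.
-/

open Finset Real

theorem le_of_multistep_supersolution {k : ℕ} (hk : 1 ≤ k) {K B : ℝ} (hK : 0 ≤ K)
    {τ w E : ℕ → ℝ} (hτ : ∀ n, 0 ≤ τ n) (hE : Monotone E)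
    (hinit : ∀ j < k, w j ≤ E j)
    (hrec : ∀ m, k - 1 ≤ m →
      w (m + 1) ≤ B + K * ∑ n ∈ Icc (k - 1) m, τ n * ∑ i ∈ range k, w (n - i))
    (hsuper : ∀ m, k - 1 ≤ m → B + K * ∑ n ∈ Icc (k - 1) m, τ n * (k * E n) ≤ E (m + 1)) :
    ∀ m, w m ≤ E m := by
  intro m
  induction m using Nat.strong_induction_on with
  | _ m ih =>
    rcases lt_or_ge m k with hm | hm
    · exact hinit m hm
    obtain ⟨m, rfl⟩ : ∃ m', m = m' + 1 := ⟨m - 1, by omega⟩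
    have history : ∀ n ∈ Icc (k - 1) m, ∑ i ∈ range k, w (n - i) ≤ k * E n := by
      intro n hn
      have hnm : n ≤ m := (mem_Icc.1 hn).2
      calc ∑ i ∈ range k, w (n - i) ≤ ∑ _i ∈ range k, E n :=
            sum_le_sum fun i _ ↦ (ih (n - i) (by omega)).trans (hE (Nat.sub_le n i))
        _ = k * E n := by rw [sum_const, card_range, nsmul_eq_mul]
    calc w (m + 1) ≤ B + K * ∑ n ∈ Icc (k - 1) m, τ n * ∑ i ∈ range k, w (n - i) :=
          hrec m (by omega)
      _ ≤ B + K * ∑ n ∈ Icc (k - 1) m, τ n * (k * E n) := by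
          gcongr with n hn
          · exact hτ n
          · exact history n hn
      _ ≤ E (m + 1) := hsuper m (by omega)

section ExpPartialSum

variable {τ : ℕ → ℝ} {c : ℝ}

theorem monotone_exp_mul_partialSum (hc : 0 ≤ c) (hτ : ∀ n, 0 ≤ τ n) :
    Monotone fun m ↦ exp (c * ∑ j ∈ range m, τ j) := fun a b hab ↦ by
  dsimp only
  gcongr
  exact fun j _ _ ↦ hτ j

theorem one_le_exp_mul_partialSum (hc : 0 ≤ c) (hτ : ∀ n, 0 ≤ τ n) (m : ℕ) :
    1 ≤ exp (c * ∑ j ∈ range m, τ j) :=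
  one_le_exp (mul_nonneg hc (sum_nonneg fun j _ ↦ hτ j))

theorem mul_exp_le_exp_add_sub_exp (a x : ℝ) : x * exp a ≤ exp (a + x) - exp a := by
  rw [exp_add]
  nlinarith [add_one_le_exp x, exp_pos a]

theorem sum_mul_exp_partialSum_le {a m : ℕ} (ham : a ≤ m) :
    ∑ n ∈ Icc a m, c * τ n * exp (c * ∑ j ∈ range n, τ j) ≤
      exp (c * ∑ j ∈ range (m + 1), τ j) - exp (c * ∑ j ∈ range a, τ j) := by
  rw [← sum_Icc_sub ham (fun n ↦ exp (c * ∑ j ∈ range n, τ j))]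
  refine sum_le_sum fun n _ ↦ ?_
  simpa only [sum_range_succ, mul_add] using
    mul_exp_le_exp_add_sub_exp (c * ∑ j ∈ range n, τ j) (c * τ n)

theorem exp_partialSum_supersolution {k : ℕ} {K B : ℝ} (hB : 0 ≤ B) (hc : 0 ≤ c)
    (hkc : k * K ≤ c) (hτ : ∀ n, 0 ≤ τ n) (m : ℕ) (hm : k - 1 ≤ m) :
    B + K * ∑ n ∈ Icc (k - 1) m, τ n * (k * (B * exp (c * ∑ j ∈ range n, τ j))) ≤
      B * exp (c * ∑ j ∈ range (m + 1), τ j) := by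
  calc B + K * ∑ n ∈ Icc (k - 1) m, τ n * (k * (B * exp (c * ∑ j ∈ range n, τ j)))
      = B + ∑ n ∈ Icc (k - 1) m, k * K * (τ n * B * exp (c * ∑ j ∈ range n, τ j)) := by
        rw [mul_sum]; congr 1; refine sum_congr rfl fun n _ ↦ ?_; ring
    _ ≤ B + ∑ n ∈ Icc (k - 1) m, c * (τ n * B * exp (c * ∑ j ∈ range n, τ j)) := by
        gcongr with n
        have := hτ n
        positivity
    _ = B + B * ∑ n ∈ Icc (k - 1) m, c * τ n * exp (c * ∑ j ∈ range n, τ j) := by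
        rw [mul_sum]; congr 1; refine sum_congr rfl fun n _ ↦ ?_; ring
    _ ≤ B + B * (exp (c * ∑ j ∈ range (m + 1), τ j) - 1) := by
        gcongr
        linarith [sum_mul_exp_partialSum_le (τ := τ) (c := c) hm,
          one_le_exp_mul_partialSum hc hτ (k - 1)]
    _ = B * exp (c * ∑ j ∈ range (m + 1), τ j) := by ring

end ExpPartialSum

theorem stmt_11_general (k : ℕ) (hk : 1 ≤ k) (K B r : ℝ)
    (hK : 0 ≤ K) (hB : 0 ≤ B) (hr : 1 ≤ r)
    (τ w : ℕ → ℝ) (hτ : ∀ n, 0 < τ n)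
    (hinit : ∀ j < k, w j ≤ B)
    (hrec : ∀ m, k - 1 ≤ m →
      w (m + 1) ≤ B + K * ∑ n ∈ Finset.Icc (k - 1) m, τ n * ∑ i ∈ Finset.range k, w (n - i)) :
    ∀ m, w m ≤ B * Real.exp ((k : ℝ) * r * K * ∑ j ∈ Finset.range m, τ j) := by
  have hτ' : ∀ n, 0 ≤ τ n := fun n ↦ (hτ n).le
  have hc : 0 ≤ (k : ℝ) * r * K := by positivity
  have hkc : (k : ℝ) * K ≤ k * r * K := by
    rw [mul_right_comm]
    exact le_mul_of_one_le_right (by positivity) hr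
  refine le_of_multistep_supersolution hk hK hτ'
    ((monotone_exp_mul_partialSum hc hτ').const_mul hB) (fun j hj ↦ ?_) hrec
    (exp_partialSum_supersolution hB hc hkc hτ')
  exact (hinit j hj).trans (le_mul_of_one_le_right hB (one_le_exp_mul_partialSum hc hτ' j))

/-- The multi-step variable-step discrete Grönwall inequality, the step from (4.11) to
(4.13) in the convergence proof of Section 4: under the local time-step ratio bound
`τₙ ≤ r·τₘ` for `|n − m| ≤ k − 1`, the recursion
`w_{m+1} ≤ B + K·Σ_{n=k-1}^{m} τₙ·Σ_{i<k} w_{n-i}` with initial bound `wⱼ ≤ B` for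
`j < k` yields `w_m ≤ B·exp(k·r·K·Σ_{j<m} τⱼ)` for every `m`. -/
theorem stmt_11 (k : ℕ) (hk : 1 ≤ k) (K B r : ℝ)
    (hK : 0 ≤ K) (hB : 0 ≤ B) (hr : 1 ≤ r)
    (τ w : ℕ → ℝ) (hτ : ∀ n, 0 < τ n)
    (hratio : ∀ n m : ℕ, n ≤ m + (k - 1) → m ≤ n + (k - 1) → τ n ≤ r * τ m)
    (hw : ∀ n, 0 ≤ w n)
    (hinit : ∀ j < k, w j ≤ B)
    (hrec : ∀ m, k - 1 ≤ m →
      w (m + 1) ≤ B + K * ∑ n ∈ Finset.Icc (k - 1) m, τ n * ∑ i ∈ Finset.range k, w (n - i)) :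
    ∀ m, w m ≤ B * Real.exp ((k : ℝ) * r * K * ∑ j ∈ Finset.range m, τ j) :=
  stmt_11_general k hk K B r hK hB hr τ w hτ hinit hrec
end

section
/- Let E be a real inner product space. Then for all v, w ∈ E: ‖v/(1 + ‖v‖²) − w/(1 + ‖w‖²)‖ ≤ ‖v − w‖. That is, the map g(v) = (1 + ‖v‖²)^{−1}·v is 1-Lipschitz on E. -/
/-!
Write `‖α • v - β • w‖² = (α‖v‖ - β‖w‖)² + 2αβ(‖v‖‖w‖ - ⟪v, w⟫)`. The second term is the
angular part and is nonnegative by Cauchy–Schwarz; with `α = (1 + ‖v‖²)⁻¹`, `β = (1 + ‖w‖²)⁻¹`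
it shrinks since `αβ ≤ 1`. The radial part shrinks because the scalar map `t ↦ t / (1 + t²)`
is 1-Lipschitz, as `s/(1+s²) - t/(1+t²) = (s - t)(1 - st)/((1+s²)(1+t²))` and
`|1 - st| ≤ (1+s²)(1+t²)`.
-/

open RealInnerProductSpace

theorem abs_div_one_add_sq_sub_div_one_add_sq_le (s t : ℝ) :
    |s / (1 + s ^ 2) - t / (1 + t ^ 2)| ≤ |s - t| := by
  have hs : 0 < 1 + s ^ 2 := by positivity
  have ht : 0 < 1 + t ^ 2 := by positivity
  have hdiff : s / (1 + s ^ 2) - t / (1 + t ^ 2)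
      = (s - t) * (1 - s * t) / ((1 + s ^ 2) * (1 + t ^ 2)) := by
    field_simp
    ring
  have hfactor : |1 - s * t| ≤ (1 + s ^ 2) * (1 + t ^ 2) :=
    abs_le.mpr ⟨by nlinarith [sq_nonneg (s + t), sq_nonneg (s * t)],
      by nlinarith [sq_nonneg (s - t), sq_nonneg (s * t)]⟩
  rw [hdiff, abs_div, abs_mul, abs_of_pos (mul_pos hs ht), div_le_iff₀ (mul_pos hs ht)]
  exact mul_le_mul_of_nonneg_left hfactor (abs_nonneg _)

section InnerProductSpace

variable {E : Type*} [NormedAddCommGroup E] [InnerProductSpace ℝ E]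

theorem norm_smul_sub_smul_sq (α β : ℝ) (v w : E) :
    ‖α • v - β • w‖ ^ 2 = (α * ‖v‖ - β * ‖w‖) ^ 2 + 2 * (α * β) * (‖v‖ * ‖w‖ - ⟪v, w⟫) := by
  rw [norm_sub_sq_real, real_inner_smul_left, real_inner_smul_right, norm_smul, norm_smul,
    Real.norm_eq_abs, Real.norm_eq_abs, mul_pow, mul_pow, sq_abs, sq_abs]
  ring

theorem norm_smul_sub_smul_le_norm_sub {α β : ℝ} {v w : E} (hαβ : α * β ≤ 1)
    (hradial : |α * ‖v‖ - β * ‖w‖| ≤ |‖v‖ - ‖w‖|) : ‖α • v - β • w‖ ≤ ‖v - w‖ := by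
  have hangular : 0 ≤ ‖v‖ * ‖w‖ - ⟪v, w⟫ := sub_nonneg.mpr (real_inner_le_norm v w)
  have hv_w := norm_smul_sub_smul_sq 1 1 v w
  simp only [one_smul, one_mul, mul_one] at hv_w
  rw [← sq_le_sq₀ (norm_nonneg _) (norm_nonneg _), norm_smul_sub_smul_sq, hv_w]
  linarith [sq_le_sq.mpr hradial, mul_nonneg (sub_nonneg.mpr hαβ) hangular]

end InnerProductSpace

/-- The map `g(v) = (1 + ‖v‖²)⁻¹ • v` is 1-Lipschitz on a real inner product space;
this underlies the Lipschitz continuity (5.4) of the no-slope-selection nonlinearity. -/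
theorem stmt_12 (E : Type*) [NormedAddCommGroup E] [InnerProductSpace ℝ E] (v w : E) :
    ‖(1 + ‖v‖ ^ 2)⁻¹ • v - (1 + ‖w‖ ^ 2)⁻¹ • w‖ ≤ ‖v - w‖ := by
  refine norm_smul_sub_smul_le_norm_sub ?_ ?_
  · rw [← mul_inv]
    exact inv_le_one_of_one_le₀ (one_le_mul_of_one_le_of_one_le
      (le_add_of_nonneg_right (sq_nonneg _)) (le_add_of_nonneg_right (sq_nonneg _)))
  · simpa only [inv_mul_eq_div] using abs_div_one_add_sq_sub_div_one_add_sq_le ‖v‖ ‖w‖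
end
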